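/- arXiv:1609.08029 — 6 statements merged into one kernel-verified Lean document; each statement's English description precedes it below -/
import Mathlib

section
/- For any real numbers w₁₊, w₁₋, w₂₊, w₂₋ and any a₂ ∈ ℝ, the jump ⟦w₁w₂³⟧ equals (a₂⟨w₂³⟩ + (1−a₂)⟨w₂⟩³)·⟦w₁⟧ + (a₂⟨w₁⟩⟨w₂²⟩ + (1+a₂)⟨w₁⟩⟨w₂⟩² + (1−a₂)⟨w₁w₂⟩⟨w₂⟩ + (1−a₂)⟨w₁w₂²⟩)·⟦w₂⟧. -/
/-- One-parameter family of splittings of the jump `⟦w₁w₂³⟧`. -/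
theorem jump_mul_cube_split (w1m w1p w2m w2p a2 : ℝ) :
    w1p * w2p ^ 3 - w1m * w2m ^ 3 =
      (a2 * ((w2p ^ 3 + w2m ^ 3) / 2) + (1 - a2) * ((w2p + w2m) / 2) ^ 3) * (w1p - w1m)
      + (a2 * ((w1p + w1m) / 2) * ((w2p ^ 2 + w2m ^ 2) / 2)
          + (1 + a2) * ((w1p + w1m) / 2) * ((w2p + w2m) / 2) ^ 2
          + (1 - a2) * ((w1p * w2p + w1m * w2m) / 2) * ((w2p + w2m) / 2)
          + (1 - a2) * ((w1p * w2p ^ 2 + w1m * w2m ^ 2) / 2)) * (w2p - w2m) := by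
  ring
end

section
/- For the shallow water equations with flat bottom, for every a₁, a₂ ∈ ℝ the numerical flux f^{a₁,a₂} given in entropy variables by f_h = (1+a₁)/(2g)·⟨w₁⟩⟨w₂⟩ + (1−a₁)/(2g)·⟨w₁w₂⟩ + a₂/(2g)·⟨w₂³⟩ + (1−a₂)/(2g)·⟨w₂⟩³ and f_{hv} = a₁/(2g)·⟨w₁²⟩ + (1−a₁)/(2g)·⟨w₁⟩² + a₂/(2g)·⟨w₁⟩⟨w₂²⟩ + (1+a₂)/(2g)·⟨w₁⟩⟨w₂⟩² + (1−a₂)/(2g)·⟨w₁w₂⟩⟨w₂⟩ + (1−a₂)/(2g)·⟨w₁w₂²⟩ + 1/(8g)·⟨w₂⁴⟩ + 1/(2g)·⟨w₂⟩²⟨w₂²⟩ satisfies Tadmor's entropy conservation condition ⟦w₁⟧·f_h + ⟦w₂⟧·f_{hv} = ⟦ψ⟧, where ψ = (1/(2g))w₁²w₂ + (1/(2g))w₁w₂³ + (1/(8g))w₂⁵. -/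
/-- Two-parameter family of numerical fluxes for the shallow water equations
with flat bottom, `h`-component, expressed in entropy variables. -/
noncomputable def swFluxH (g a1 a2 w1m w1p w2m w2p : ℝ) : ℝ :=
  (1 + a1) / (2 * g) * ((w1p + w1m) / 2) * ((w2p + w2m) / 2)
    + (1 - a1) / (2 * g) * ((w1p * w2p + w1m * w2m) / 2)
    + a2 / (2 * g) * ((w2p ^ 3 + w2m ^ 3) / 2)
    + (1 - a2) / (2 * g) * ((w2p + w2m) / 2) ^ 3

/-- Two-parameter family of numerical fluxes, `hv`-component, in entropy variables. -/
noncomputable def swFluxHV (g a1 a2 w1m w1p w2m w2p : ℝ) : ℝ :=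
  a1 / (2 * g) * ((w1p ^ 2 + w1m ^ 2) / 2)
    + (1 - a1) / (2 * g) * ((w1p + w1m) / 2) ^ 2
    + a2 / (2 * g) * ((w1p + w1m) / 2) * ((w2p ^ 2 + w2m ^ 2) / 2)
    + (1 + a2) / (2 * g) * ((w1p + w1m) / 2) * ((w2p + w2m) / 2) ^ 2
    + (1 - a2) / (2 * g) * ((w1p * w2p + w1m * w2m) / 2) * ((w2p + w2m) / 2)
    + (1 - a2) / (2 * g) * ((w1p * w2p ^ 2 + w1m * w2m ^ 2) / 2)
    + 1 / (8 * g) * ((w2p ^ 4 + w2m ^ 4) / 2)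
    + 1 / (2 * g) * ((w2p + w2m) / 2) ^ 2 * ((w2p ^ 2 + w2m ^ 2) / 2)

/-- Flux potential of the shallow water equations in entropy variables. -/
noncomputable def swFluxPotential (g w1 w2 : ℝ) : ℝ :=
  1 / (2 * g) * w1 ^ 2 * w2 + 1 / (2 * g) * w1 * w2 ^ 3 + 1 / (8 * g) * w2 ^ 5

/-- Tadmor's entropy conservation condition for the two-parameter family:
`⟦w⟧ · f^{a₁,a₂} = ⟦ψ⟧`. -/
theorem swFlux_entropy_conservative (g a1 a2 w1m w1p w2m w2p : ℝ) (hg : 0 < g) :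
    (w1p - w1m) * swFluxH g a1 a2 w1m w1p w2m w2p
      + (w2p - w2m) * swFluxHV g a1 a2 w1m w1p w2m w2p
      = swFluxPotential g w1p w2p - swFluxPotential g w1m w2m := by
  unfold swFluxH swFluxHV swFluxPotential
  field_simp
  ring
end

section
/- The two-parameter family with Tadmor's parameters a₁ = a₂ = 1/3 equals the path-integrated entropy conservative flux: for all states w₋, w₊, f^{1/3,1/3}(w₋, w₊) = ∫₀¹ f(u((1−s)w₋ + sw₊)) ds componentwise, where f∘u is the shallow water flux in entropy variables. -/
/-- Integral of a quartic polynomial over `[0,1]`. -/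
lemma swFlux_poly_integral (c1 c2 c3 c4 c5 : ℝ) :
    (∫ s in (0:ℝ)..1, (c1 + c2 * s + c3 * s ^ 2 + c4 * s ^ 3 + c5 * s ^ 4))
      = c1 + c2 / 2 + c3 / 3 + c4 / 4 + c5 / 5 := by
  have key : ∀ x ∈ Set.uIcc (0:ℝ) 1,
      HasDerivAt (fun s : ℝ => c1 * s ^ 1 + c2 / 2 * s ^ 2 + c3 / 3 * s ^ 3
        + c4 / 4 * s ^ 4 + c5 / 5 * s ^ 5)
        (c1 + c2 * x + c3 * x ^ 2 + c4 * x ^ 3 + c5 * x ^ 4) x := by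
    intro x _
    have h1 := (hasDerivAt_pow 1 x).const_mul c1
    have h2 := (hasDerivAt_pow 2 x).const_mul (c2 / 2)
    have h3 := (hasDerivAt_pow 3 x).const_mul (c3 / 3)
    have h4 := (hasDerivAt_pow 4 x).const_mul (c4 / 4)
    have h5 := (hasDerivAt_pow 5 x).const_mul (c5 / 5)
    have h := (((h1.add h2).add h3).add h4).add h5
    refine h.congr_deriv ?_
    push_cast
    ring
  have hcont : IntervalIntegrable
      (fun x : ℝ => c1 + c2 * x + c3 * x ^ 2 + c4 * x ^ 3 + c5 * x ^ 4)
      MeasureTheory.volume 0 1 := by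
    apply Continuous.intervalIntegrable
    fun_prop
  rw [intervalIntegral.integral_eq_sub_of_hasDerivAt key hcont]
  norm_num

/-- Tadmor's entropy conservative flux, obtained by integration along the
straight segment in entropy-variable space, equals `f^{1/3,1/3}`. -/
theorem swFlux_tadmor_integral (g w1m w1p w2m w2p : ℝ) (hg : 0 < g) :
    (∫ s in (0:ℝ)..1,
        1 / g * (((1 - s) * w1m + s * w1p) * ((1 - s) * w2m + s * w2p)
          + ((1 - s) * w2m + s * w2p) ^ 3 / 2))
      = swFluxH g (1/3) (1/3) w1m w1p w2m w2p
    ∧ (∫ s in (0:ℝ)..1,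
        1 / g * (((1 - s) * w1m + s * w1p) ^ 2 / 2
          + 3 / 2 * ((1 - s) * w1m + s * w1p) * ((1 - s) * w2m + s * w2p) ^ 2
          + 5 / 8 * ((1 - s) * w2m + s * w2p) ^ 4))
      = swFluxHV g (1/3) (1/3) w1m w1p w2m w2p := by
  constructor
  · calc
      (∫ s in (0:ℝ)..1,
          1 / g * (((1 - s) * w1m + s * w1p) * ((1 - s) * w2m + s * w2p)
            + ((1 - s) * w2m + s * w2p) ^ 3 / 2))
        = ∫ s in (0:ℝ)..1,
            (1 / g * (w1m * w2m + w2m ^ 3 / 2)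
              + 1 / g * (w1m * (w2p - w2m) + w2m * (w1p - w1m)
                  + 3 / 2 * w2m ^ 2 * (w2p - w2m)) * s
              + 1 / g * ((w1p - w1m) * (w2p - w2m)
                  + 3 / 2 * w2m * (w2p - w2m) ^ 2) * s ^ 2
              + 1 / g * ((w2p - w2m) ^ 3 / 2) * s ^ 3
              + (0 : ℝ) * s ^ 4) := by
          apply intervalIntegral.integral_congr
          intro s _
          ring
      _ = _ := by
          rw [swFlux_poly_integral]
          unfold swFluxH
          field_simp
          ring
  · calc
      (∫ s in (0:ℝ)..1,
          1 / g * (((1 - s) * w1m + s * w1p) ^ 2 / 2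
            + 3 / 2 * ((1 - s) * w1m + s * w1p) * ((1 - s) * w2m + s * w2p) ^ 2
            + 5 / 8 * ((1 - s) * w2m + s * w2p) ^ 4))
        = ∫ s in (0:ℝ)..1,
            (1 / g * (w1m ^ 2 / 2 + 3 / 2 * w1m * w2m ^ 2 + 5 / 8 * w2m ^ 4)
              + 1 / g * (w1m * (w1p - w1m)
                  + 3 / 2 * (2 * w1m * w2m * (w2p - w2m) + (w1p - w1m) * w2m ^ 2)
                  + 5 / 2 * w2m ^ 3 * (w2p - w2m)) * s
              + 1 / g * ((w1p - w1m) ^ 2 / 2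
                  + 3 / 2 * (w1m * (w2p - w2m) ^ 2
                      + 2 * (w1p - w1m) * w2m * (w2p - w2m))
                  + 15 / 4 * w2m ^ 2 * (w2p - w2m) ^ 2) * s ^ 2
              + 1 / g * (3 / 2 * (w1p - w1m) * (w2p - w2m) ^ 2
                  + 5 / 2 * w2m * (w2p - w2m) ^ 3) * s ^ 3
              + 1 / g * (5 / 8 * (w2p - w2m) ^ 4) * s ^ 4) := by
          apply intervalIntegral.integral_congr
          intro s _
          ring
      _ = _ := by
          rw [swFlux_poly_integral]
          unfold swFluxHV
          field_simp
          ring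
end

section
/- The classical local Lax-Friedrichs flux for the shallow water equations with flat bottom is semidiscretely entropy stable: if h₊, h₋ ≥ 0 and λ ≥ max{|v₊|, |v₋|}, then ⟦w⟧·f^num − ⟦ψ⟧ = −(g/2)(h₊ − h₋)²(λ − (v₊ − v₋)/2) − (1/4)h₊(λ − v₊)(v₊ − v₋)² − (1/4)h₋(λ − v₋)(v₊ − v₋)² ≤ 0, where f^num = ⟨f⟩ − (λ/2)⟦u⟧. -/
/-- Semidiscrete entropy stability of the classical local Lax–Friedrichs flux
for the shallow water equations with flat bottom: the entropy production
`⟦w⟧·f^num − ⟦ψ⟧` equals an explicitly non-positive expression. -/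
theorem sw_LLF_entropy_stable (g lam hp hm vp vm : ℝ) (hg : 0 < g)
    (hhp : 0 ≤ hp) (hhm : 0 ≤ hm) (hlp : |vp| ≤ lam) (hlm : |vm| ≤ lam) :
    (((g * hp - vp ^ 2 / 2) - (g * hm - vm ^ 2 / 2))
          * ((hm * vm + hp * vp) / 2 - lam / 2 * (hp - hm))
        + (vp - vm)
          * (((hm * vm ^ 2 + g * hm ^ 2 / 2) + (hp * vp ^ 2 + g * hp ^ 2 / 2)) / 2
              - lam / 2 * (hp * vp - hm * vm))
        - (g / 2 * hp ^ 2 * vp - g / 2 * hm ^ 2 * vm)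
      = -(g / 2) * (hp - hm) ^ 2 * (lam - (vp - vm) / 2)
        - 1 / 4 * hp * (lam - vp) * (vp - vm) ^ 2
        - 1 / 4 * hm * (lam + vm) * (vp - vm) ^ 2)
    ∧ -(g / 2) * (hp - hm) ^ 2 * (lam - (vp - vm) / 2)
        - 1 / 4 * hp * (lam - vp) * (vp - vm) ^ 2
        - 1 / 4 * hm * (lam + vm) * (vp - vm) ^ 2 ≤ 0 := by
  have h1 : vp ≤ lam := (abs_le.mp hlp).2
  have h2 : -lam ≤ vm := (abs_le.mp hlm).1
  have h3 : vm ≤ lam := (abs_le.mp hlm).2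
  have h4 : -lam ≤ vp := (abs_le.mp hlp).1
  constructor
  · ring
  · have t1 : 0 ≤ g / 2 * (hp - hm) ^ 2 * (lam - (vp - vm) / 2) := by
      apply mul_nonneg (mul_nonneg (by linarith) (sq_nonneg _)); linarith
    have t2 : 0 ≤ 1 / 4 * hp * (lam - vp) * (vp - vm) ^ 2 := by
      apply mul_nonneg (mul_nonneg (mul_nonneg (by norm_num) hhp) (by linarith)) (sq_nonneg _)
    have t3 : 0 ≤ 1 / 4 * hm * (lam + vm) * (vp - vm) ^ 2 := by
      apply mul_nonneg (mul_nonneg (mul_nonneg (by norm_num) hhm) (by linarith)) (sq_nonneg _)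
    linarith
end

section
/- The local Lax-Friedrichs finite volume update preserves non-negativity of the water height: if h_i⁺ = h_i[1 − (Δt/Δx)(λ₋ + λ₊)/2] + h_{i+1}(Δt/(2Δx))(λ₊ − v_{i+1}) + h_{i−1}(Δt/(2Δx))(λ₋ + v_{i−1}) (equivalently λ₋ − v_{i−1} replaced appropriately), with h_{i−1}, h_i, h_{i+1} ≥ 0, λ₊ ≥ |v_{i+1}|, λ₋ ≥ |v_{i−1}|, Δt, Δx > 0, and Δt ≤ 2Δx/(λ₋ + λ₊), then h_i⁺ ≥ 0. -/
/-- Positivity preservation of the local Lax–Friedrichs finite volume update: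
the Euler step expands into a convex-type combination whose coefficients are
non-negative under the wave speed bounds and CFL condition, so `h_i⁺ ≥ 0`. -/
theorem sw_LLF_FV_positivity (Δt Δx lamp lamm him hi hip vim vi vip : ℝ)
    (hhim : 0 ≤ him) (hhi : 0 ≤ hi) (hhip : 0 ≤ hip)
    (hlamp : |vip| ≤ lamp) (hlamm : |vim| ≤ lamm)
    (hΔt : 0 < Δt) (hΔx : 0 < Δx)
    (hCFL : Δt ≤ 2 * Δx / (lamm + lamp)) :
    (hi - Δt / Δx * (((hi * vi + hip * vip) / 2 - lamp / 2 * (hip - hi))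
          - ((him * vim + hi * vi) / 2 - lamm / 2 * (hi - him)))
      = hi * (1 - Δt / Δx * (lamm + lamp) / 2)
        + hip * (Δt / (2 * Δx)) * (lamp - vip)
        + him * (Δt / (2 * Δx)) * (lamm + vim))
    ∧ 0 ≤ hi * (1 - Δt / Δx * (lamm + lamp) / 2)
        + hip * (Δt / (2 * Δx)) * (lamp - vip)
        + him * (Δt / (2 * Δx)) * (lamm + vim) := by
  constructor
  · ring
  · have hp : 0 ≤ lamp := le_trans (abs_nonneg _) hlamp
    have hm : 0 ≤ lamm := le_trans (abs_nonneg _) hlamm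
    have hvp : lamp - vip ≥ 0 := by
      have := (abs_le.mp hlamp).2
      linarith [le_abs_self vip]
    have hvm : lamm + vim ≥ 0 := by
      have := (abs_le.mp hlamm).1
      linarith [neg_abs_le vim]
    have hc : 0 ≤ Δt / (2 * Δx) := by positivity
    have h1 : 0 ≤ 1 - Δt / Δx * (lamm + lamp) / 2 := by
      rcases eq_or_lt_of_le (add_nonneg hm hp) with h0 | h0
      · rw [← h0]; simp
      · have h2 : Δt * (lamm + lamp) ≤ 2 * Δx := (le_div_iff₀ h0).mp hCFL
        rw [sub_nonneg, div_mul_eq_mul_div, div_div, div_le_one (by positivity)]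
        linarith
    have := mul_nonneg hhi h1
    have := mul_nonneg (mul_nonneg hhip hc) hvp
    have := mul_nonneg (mul_nonneg hhim hc) hvm
    linarith
end

section
/- The Lax-Friedrichs-type dissipation with arithmetic-mean Jacobian simplifies to jumps of conserved quantities: for the shallow water equations with bottom b, −(λ/2)·∂_w u(⟨h⟩,⟨v⟩)·⟦w⟧ = −(λ/2)·(⟦h + b⟧, ⟦hv⟧ + ⟨v⟩⟦b⟧), where ∂_w u(h, v) = [[1/g, v/g], [v/g, h + v²/g]] and w = (g(h+b) − v²/2, v). -/
/-- The Lax–Friedrichs-type dissipation with arithmetic-mean Jacobian collapses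
to jumps of conserved quantities: componentwise,
`−(λ/2)·∂_w u(⟨h⟩,⟨v⟩)·⟦w⟧ = −(λ/2)·(⟦h+b⟧, ⟦hv⟧ + ⟨v⟩⟦b⟧)`, where
`w = (g(h+b) − v²/2, v)`. -/
theorem sw_LLF_dissipation_simplifies (g lam hp hm vp vm bp bm : ℝ) (hg : 0 < g) :
    (-(lam / 2) * (1 / g * ((g * (hp + bp) - vp ^ 2 / 2)
            - (g * (hm + bm) - vm ^ 2 / 2))
          + ((vp + vm) / 2) / g * (vp - vm))
        = -(lam / 2) * ((hp + bp) - (hm + bm)))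
    ∧ (-(lam / 2) * (((vp + vm) / 2) / g * ((g * (hp + bp) - vp ^ 2 / 2)
            - (g * (hm + bm) - vm ^ 2 / 2))
          + ((hp + hm) / 2 + ((vp + vm) / 2) ^ 2 / g) * (vp - vm))
        = -(lam / 2) * ((hp * vp - hm * vm) + ((vp + vm) / 2) * (bp - bm))) := by
  have hg0 : g ≠ 0 := ne_of_gt hg
  constructor <;> field_simp <;> ring
end
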